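/- arXiv:1304.4164 — 6 statements merged into one kernel-verified Lean document; each statement's English description precedes it below -/
import Mathlib

section
/- The rule ∀x φ ⊢ φ is not sound in team semantics: there is a structure M with domain {0,1} and a team X over {x,y} such that M ⊨_X ∀x (x ⊥ y) but M ⊭_X x ⊥ y. Concretely X = {(0,0),(0,1),(1,0)} works, since X(M/x) is the full team on {x,y}. -/
/-- Satisfaction of the unconditional independence atom `x ⊥ y` on a team `X`. -/
def IndepXY {V M : Type*} (x y : V) (X : Set (V → M)) : Prop :=
  ∀ s ∈ X, ∀ s' ∈ X, ∃ s'' ∈ X, s'' x = s x ∧ s'' y = s' y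

/-- The duplicated team `X(M/x) = {s(a/x) : s ∈ X, a ∈ M}`. -/
def dupTeam {V M : Type*} [DecidableEq V] (X : Set (V → M)) (x : V) : Set (V → M) :=
  {s' | ∃ s ∈ X, ∃ a : M, s' = Function.update s x a}

/-- the rule `∀x φ ⊢ φ` is not sound in team semantics.  Over the domain
`Fin 2` with variables `x := false`, `y := true` (of type `Bool`), the team
`X = {(0,0), (0,1), (1,0)}` satisfies `∀x (x ⊥ y)` (i.e. `x ⊥ y` holds in `X(M/x)`,
which is the full team) but `X` itself does not satisfy `x ⊥ y`. -/
theorem forall_elimination_not_sound :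
    ∃ X : Set (Bool → Fin 2),
      X = {s | ¬ (s false = 1 ∧ s true = 1)} ∧
      IndepXY false true (dupTeam X false) ∧
      ¬ IndepXY false true X := by
  refine ⟨{s | ¬ (s false = 1 ∧ s true = 1)}, rfl, ?_, ?_⟩
  · rintro s ⟨t, ht, a, rfl⟩ s' ⟨t', ht', a', rfl⟩
    refine ⟨Function.update t' false a, ⟨t', ht', a, rfl⟩, ?_, ?_⟩
    · simp [Function.update]
    · simp [Function.update]
  · intro h
    have hs : (fun b => if b then (0 : Fin 2) else 1) ∈
        {s : Bool → Fin 2 | ¬ (s false = 1 ∧ s true = 1)} := by simp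
    have hs' : (fun b => if b then (1 : Fin 2) else 0) ∈
        {s : Bool → Fin 2 | ¬ (s false = 1 ∧ s true = 1)} := by
      simp
    obtain ⟨s'', hmem, h1, h2⟩ := h _ hs _ hs'
    simp only [if_neg, if_pos] at h1 h2
    exact hmem ⟨by simpa using h1, by simpa using h2⟩
end

section
/- The dependence atom dep(t1,...,tn) is equivalent to the conditional independence atom t_n ⊥_{t1...t_{n-1}} t_n: for every structure M and team X, M ⊨_X dep(t1,...,tn) iff M ⊨_X t_n ⊥_{t1...t_{n-1}} t_n. -/
/-- A team over a structure with domain `M` and variables `V` is a set of assignments. -/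
abbrev Team (V M : Type*) := Set (V → M)

/-- Satisfaction of the dependence atom `dep(t1, ..., t_{n+1})`. -/
def DepAtom {V M : Type*} {n : ℕ} (t : Fin (n + 1) → (V → M) → M) (X : Team V M) : Prop :=
  ∀ s ∈ X, ∀ s' ∈ X,
    (∀ i : Fin n, t i.castSucc s = t i.castSucc s') → t (Fin.last n) s = t (Fin.last n) s'

/-- Satisfaction of the conditional independence atom `t1 ⊥_{t3} t2`, with (tuples of)
terms abstracted as their evaluation functions on assignments. -/
def IndepAtom {V M α β γ : Type*} (t1 : (V → M) → α) (t3 : (V → M) → γ)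
    (t2 : (V → M) → β) (X : Team V M) : Prop :=
  ∀ s ∈ X, ∀ s' ∈ X, t3 s = t3 s' →
    ∃ s'' ∈ X, t1 s'' = t1 s ∧ t3 s'' = t3 s ∧ t2 s'' = t2 s'

/-- the dependence atom `dep(t1,...,tn)` is equivalent to the conditional
independence atom `t_n ⊥_{t1...t_{n-1}} t_n`: for every structure and team `X`,
`M ⊨_X dep(t1,...,tn)` iff `M ⊨_X t_n ⊥_{t1...t_{n-1}} t_n`. -/
theorem depAtom_iff_indepAtom {V M : Type*} {n : ℕ}
    (t : Fin (n + 1) → (V → M) → M) (X : Team V M) :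
    DepAtom t X ↔
      IndepAtom (fun s => t (Fin.last n) s) (fun s => fun i : Fin n => t i.castSucc s)
        (fun s => t (Fin.last n) s) X := by
  constructor
  · intro h s hs s' hs' h3
    exact ⟨s, hs, rfl, rfl, h s hs s' hs' (fun i => congrFun h3 i)⟩
  · intro h s hs s' hs' hagree
    obtain ⟨s'', _, h1, _, h2⟩ := h s hs s' hs' (funext hagree)
    simp only [] at h1 h2; exact h1 ▸ h2
end

section
/- Locality for independence logic with lax semantics: if V ⊇ Fr(φ) then M ⊨_X φ iff M ⊨_{X↾V} φ, where X↾V = {s↾V : s ∈ X}. -/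
open FirstOrder Language

/-- Formulas of independence logic over a first-order language `L`, with variables `ℕ`:
first-order formulas, conditional independence atoms `t1 ⊥_{t3} t2` (written
`indep t1 t2 t3`) between tuples (lists) of terms, conjunction, disjunction, and
existential and universal quantification. -/
inductive TeamFormula (L : Language) : Type _ where
  | fo (φ : L.Formula ℕ)
  | indep (t1 t2 t3 : List (L.Term ℕ))
  | and (φ ψ : TeamFormula L)
  | or (φ ψ : TeamFormula L)
  | ex (x : ℕ) (φ : TeamFormula L)
  | all (x : ℕ) (φ : TeamFormula L)

namespace TeamFormula

variable {L : Language}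

/-- The set of free variables of an independence-logic formula. -/
def Fr : TeamFormula L → Set ℕ
  | .fo φ => ↑φ.freeVarFinset
  | .indep t1 t2 t3 => ↑((t1 ++ t2 ++ t3).foldr (fun t s => t.varFinset ∪ s) ∅)
  | .and φ ψ => φ.Fr ∪ ψ.Fr
  | .or φ ψ => φ.Fr ∪ ψ.Fr
  | .ex x φ => φ.Fr \ {x}
  | .all x φ => φ.Fr \ {x}

/-- A team is a set of assignments. -/
abbrev Team (M : Type*) := Set (ℕ → M)

/-- The value of a tuple (list) of terms under an assignment. -/
def listVal {M : Type*} [L.Structure M] (ts : List (L.Term ℕ)) (s : ℕ → M) : List M :=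
  ts.map fun t => t.realize s

/-- Lax team semantics for independence logic.  First-order formulas are evaluated
pointwise; disjunction splits the team into a union; `∃x φ` is witnessed by a function
`F` from the team to nonempty sets of elements, extending the team to
`X(F/x) = {s(a/x) : s ∈ X, a ∈ F s}`; `∀x φ` duplicates the team to `X(M/x)`. -/
def Sat (M : Type*) [L.Structure M] : TeamFormula L → Team M → Prop
  | .fo φ, X => ∀ s ∈ X, φ.Realize s
  | .indep t1 t2 t3, X => ∀ s ∈ X, ∀ s' ∈ X, listVal t3 s = listVal t3 s' →
      ∃ s'' ∈ X, listVal t1 s'' = listVal t1 s ∧ listVal t3 s'' = listVal t3 s ∧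
        listVal t2 s'' = listVal t2 s'
  | .and φ ψ, X => φ.Sat M X ∧ ψ.Sat M X
  | .or φ ψ, X => ∃ Y Z : Team M, Y ∪ Z = X ∧ φ.Sat M Y ∧ ψ.Sat M Z
  | .ex x φ, X => ∃ F : (ℕ → M) → Set M, (∀ s ∈ X, (F s).Nonempty) ∧
      φ.Sat M {s' | ∃ s ∈ X, ∃ a ∈ F s, s' = Function.update s x a}
  | .all x φ, X => φ.Sat M {s' | ∃ s ∈ X, ∃ a : M, s' = Function.update s x a}

end TeamFormula

/-! Induction on `φ`, for all `V ⊇ Fr(φ)` and all teams `X`, `Y` with `X↾V = Y↾V`: every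
assignment of one team has a partner in the other that agrees with it on `V`. For `φ ∨ ψ`, `Y`
is split according to the part of the split of `X` in which a partner lies; for `∃x φ`, the
witness set at `t ∈ Y` collects the witness sets of all partners of `t`, so that the two
supplemented teams agree on `V ∪ {x}`. -/

theorem Set.EqOn.update_insert {α β : Type*} [DecidableEq α] {s s' : α → β} {V : Set α}
    (h : EqOn s s' V) (x : α) (a : β) :
    EqOn (Function.update s x a) (Function.update s' x a) (insert x V) := by
  rintro v (rfl | hv)
  · simp
  · by_cases hvx : v = x
    · simp [hvx]
    · simp [hvx, h hv]

namespace FirstOrder.Language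

variable {L : Language} {M α : Type*} [L.Structure M] [DecidableEq α]

theorem Term.realize_eq_of_eqOn {t : L.Term α} {s s' : α → M} (h : Set.EqOn s s' t.varFinset) :
    t.realize s = t.realize s' := by
  rw [← realize_restrictVar' subset_rfl (v := s), ← realize_restrictVar' subset_rfl (v := s')]
  exact congrArg₂ _ (funext fun v => h v.2) rfl

theorem Formula.realize_iff_of_eqOn {φ : L.Formula α} {s s' : α → M}
    (h : Set.EqOn s s' φ.freeVarFinset) : φ.Realize s ↔ φ.Realize s' := by
  simp only [Formula.Realize]
  rw [← BoundedFormula.realize_restrictFreeVar' subset_rfl (v := s),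
    ← BoundedFormula.realize_restrictFreeVar' subset_rfl (v := s')]
  exact iff_of_eq (congrArg₂ _ (funext fun v => h v.2) rfl)

end FirstOrder.Language

namespace TeamFormula

open Set Function

variable {L : Language} {M : Type*} [L.Structure M]

theorem listVal_eq_of_eqOn {V : Set ℕ} {ts : List (L.Term ℕ)}
    (hts : ∀ t ∈ ts, ↑t.varFinset ⊆ V) {s s' : ℕ → M} (h : EqOn s s' V) :
    listVal ts s = listVal ts s' :=
  List.map_congr_left fun t ht => t.realize_eq_of_eqOn (h.mono (hts t ht))

theorem varFinset_subset_foldr {t : L.Term ℕ} {ts : List (L.Term ℕ)} (ht : t ∈ ts) :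
    (t.varFinset : Set ℕ) ⊆ ts.foldr (fun t s => ↑t.varFinset ∪ s) ∅ := by
  induction ts with
  | nil => cases ht
  | cons u ts ih =>
    rcases List.mem_cons.mp ht with rfl | ht
    · exact subset_union_left
    · exact (ih ht).trans subset_union_right

/-- Teams `X` and `Y` agree on `V` when `X↾V = Y↾V`. -/
def AgreeOn (V : Set ℕ) (X Y : Team M) : Prop :=
  (∀ s ∈ X, ∃ t ∈ Y, EqOn s t V) ∧ ∀ t ∈ Y, ∃ s ∈ X, EqOn s t V

theorem AgreeOn.symm {V : Set ℕ} {X Y : Team M} (h : AgreeOn V X Y) : AgreeOn V Y X :=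
  ⟨fun t ht => let ⟨s, hs, hst⟩ := h.2 t ht; ⟨s, hs, hst.symm⟩,
    fun s hs => let ⟨t, ht, hst⟩ := h.1 s hs; ⟨t, ht, hst.symm⟩⟩

theorem agreeOn_of_image_restrict_eq {V : Set ℕ} {X Y : Team M}
    (h : (fun s => V.domRestrict s) '' X = (fun s => V.domRestrict s) '' Y) : AgreeOn V X Y := by
  have partner : ∀ {X Y : Team M},
      (fun s => V.domRestrict s) '' X ⊆ (fun s => V.domRestrict s) '' Y →
        ∀ s ∈ X, ∃ t ∈ Y, EqOn s t V := by
    rintro X Y hXY s hs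
    obtain ⟨t, ht, hts⟩ := hXY ⟨s, hs, rfl⟩
    exact ⟨t, ht, (domRestrict_eq_domRestrict_iff.mp hts).symm⟩
  exact ⟨partner h.subset, fun t ht =>
    let ⟨s, hs, hts⟩ := partner h.symm.subset t ht; ⟨s, hs, hts.symm⟩⟩

theorem AgreeOn.sep {V : Set ℕ} {X Y X' : Team M} (h : AgreeOn V X Y) (hX' : X' ⊆ X) :
    AgreeOn V X' {t ∈ Y | ∃ s ∈ X', EqOn s t V} :=
  ⟨fun s hs => let ⟨t, ht, hst⟩ := h.1 s (hX' hs); ⟨t, ⟨ht, s, hs, hst⟩, hst⟩,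
    fun _ ht => ht.2⟩

theorem AgreeOn.sep_union_sep {V : Set ℕ} {X₁ X₂ Y : Team M} (h : AgreeOn V (X₁ ∪ X₂) Y) :
    {t ∈ Y | ∃ s ∈ X₁, EqOn s t V} ∪ {t ∈ Y | ∃ s ∈ X₂, EqOn s t V} = Y := by
  refine union_subset (sep_subset _ _) (sep_subset _ _) |>.antisymm fun t ht => ?_
  obtain ⟨s, hs | hs, hst⟩ := h.2 t ht
  exacts [Or.inl ⟨ht, s, hs, hst⟩, Or.inr ⟨ht, s, hs, hst⟩]

/-- The supplement `X(F/x)`. -/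
def supplement (X : Team M) (x : ℕ) (F : (ℕ → M) → Set M) : Team M :=
  {s' | ∃ s ∈ X, ∃ a ∈ F s, s' = update s x a}

theorem agreeOn_supplement {V : Set ℕ} {X Y : Team M} {x : ℕ} {F G : (ℕ → M) → Set M}
    (hF : ∀ s ∈ X, ∀ a ∈ F s, ∃ t ∈ Y, EqOn s t V ∧ a ∈ G t)
    (hG : ∀ t ∈ Y, ∀ a ∈ G t, ∃ s ∈ X, EqOn s t V ∧ a ∈ F s) :
    AgreeOn (insert x V) (supplement X x F) (supplement Y x G) := by
  constructor
  · rintro _ ⟨s, hs, a, ha, rfl⟩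
    obtain ⟨t, ht, hst, hat⟩ := hF s hs a ha
    exact ⟨update t x a, ⟨t, ht, a, hat, rfl⟩, hst.update_insert x a⟩
  · rintro _ ⟨t, ht, a, hat, rfl⟩
    obtain ⟨s, hs, hst, ha⟩ := hG t ht a hat
    exact ⟨update s x a, ⟨s, hs, a, ha, rfl⟩, hst.update_insert x a⟩

theorem supplement_univ (X : Team M) (x : ℕ) :
    supplement X x (fun _ => univ) = {s' | ∃ s ∈ X, ∃ a : M, s' = update s x a} := by
  simp [supplement]

theorem sat_indep_of_agreeOn {t₁ t₂ t₃ : List (L.Term ℕ)} {V : Set ℕ}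
    (hV : (indep t₁ t₂ t₃).Fr ⊆ V) {X Y : Team M} (h : AgreeOn V X Y)
    (hX : (indep t₁ t₂ t₃).Sat M X) : (indep t₁ t₂ t₃).Sat M Y := by
  have hts : ∀ t ∈ t₁ ++ t₂ ++ t₃, ↑t.varFinset ⊆ V := fun t ht =>
    (varFinset_subset_foldr ht).trans hV
  have h₁ : ∀ {s s' : ℕ → M}, EqOn s s' V → listVal t₁ s = listVal t₁ s' :=
    listVal_eq_of_eqOn fun t ht => hts t (by simp [ht])
  have h₂ : ∀ {s s' : ℕ → M}, EqOn s s' V → listVal t₂ s = listVal t₂ s' :=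
    listVal_eq_of_eqOn fun t ht => hts t (by simp [ht])
  have h₃ : ∀ {s s' : ℕ → M}, EqOn s s' V → listVal t₃ s = listVal t₃ s' :=
    listVal_eq_of_eqOn fun t ht => hts t (by simp [ht])
  intro t ht t' ht' htt'
  obtain ⟨s, hs, hst⟩ := h.2 t ht
  obtain ⟨s', hs', hst'⟩ := h.2 t' ht'
  obtain ⟨u, hu, hu₁, hu₃, hu₂⟩ := hX s hs s' hs' (by rw [h₃ hst, h₃ hst', htt'])
  obtain ⟨w, hw, huw⟩ := h.1 u hu
  refine ⟨w, hw, ?_, ?_, ?_⟩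
  · rw [← h₁ huw, hu₁, h₁ hst]
  · rw [← h₃ huw, hu₃, h₃ hst]
  · rw [← h₂ huw, hu₂, h₂ hst']

theorem sat_of_agreeOn {φ : TeamFormula L} {V : Set ℕ} (hV : φ.Fr ⊆ V) {X Y : Team M}
    (h : AgreeOn V X Y) (hX : φ.Sat M X) : φ.Sat M Y := by
  induction φ generalizing V X Y with
  | fo φ =>
    intro t ht
    obtain ⟨s, hs, hst⟩ := h.2 t ht
    exact (φ.realize_iff_of_eqOn (hst.mono hV)).mp (hX s hs)
  | indep t₁ t₂ t₃ => exact sat_indep_of_agreeOn hV h hX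
  | and φ ψ ihφ ihψ =>
    exact ⟨ihφ (subset_union_left.trans hV) h hX.1, ihψ (subset_union_right.trans hV) h hX.2⟩
  | or φ ψ ihφ ihψ =>
    obtain ⟨X₁, X₂, rfl, h₁, h₂⟩ := hX
    exact ⟨_, _, h.sep_union_sep, ihφ (subset_union_left.trans hV) (h.sep subset_union_left) h₁,
      ihψ (subset_union_right.trans hV) (h.sep subset_union_right) h₂⟩
  | ex x φ ih =>
    obtain ⟨F, hF, hsat⟩ := hX
    refine ⟨fun t => {a | ∃ s ∈ X, EqOn s t V ∧ a ∈ F s}, fun t ht => ?_, ?_⟩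
    · obtain ⟨s, hs, hst⟩ := h.2 t ht
      obtain ⟨a, ha⟩ := hF s hs
      exact ⟨a, s, hs, hst, ha⟩
    · refine ih (sdiff_subset_iff.mp hV) (agreeOn_supplement ?_ ?_) hsat
      · intro s hs a ha
        obtain ⟨t, ht, hst⟩ := h.1 s hs
        exact ⟨t, ht, hst, s, hs, hst, ha⟩
      · exact fun t _ a ha => ha
  | all x φ ih =>
    rw [Sat, ← supplement_univ] at hX ⊢
    refine ih (sdiff_subset_iff.mp hV) (agreeOn_supplement ?_ ?_) hX
    · exact fun s hs a _ => let ⟨t, ht, hst⟩ := h.1 s hs; ⟨t, ht, hst, mem_univ a⟩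
    · exact fun t ht a _ => let ⟨s, hs, hst⟩ := h.2 t ht; ⟨s, hs, hst, mem_univ a⟩

end TeamFormula

/-- locality of lax team semantics for independence logic.  If
`V ⊇ Fr(φ)`, then satisfaction depends only on the restriction `X↾V` of the team to the
variables in `V`: any two teams with the same restriction to `V` satisfy the same
formulas whose free variables are contained in `V`.  In particular `M ⊨_X φ` iff
`M ⊨_{X↾V} φ`. -/
theorem TeamFormula.locality {L : FirstOrder.Language} {M : Type*} [L.Structure M]
    (φ : TeamFormula L) (V : Set ℕ) (hV : φ.Fr ⊆ V)
    (X Y : TeamFormula.Team M)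
    (hXY : (fun s => V.restrict s) '' X = (fun s => V.restrict s) '' Y) :
    φ.Sat M X ↔ φ.Sat M Y :=
  have h := agreeOn_of_image_restrict_eq hXY
  ⟨sat_of_agreeOn hV h, sat_of_agreeOn hV h.symm⟩
end

section
/- Distributing the team over a disjunction of universal-free formulas: ∀x(φ ∨ ψ) is not in general equivalent to (∀x φ) ∨ ψ even when x does not occur free in ψ: taking φ := (x ⊆ y ∧ (x=1 ∨ y=1)) and ψ := (y=0) over a structure M with domain {0,1} and team X = {{(y,0)},{(y,1)}}, one has M ⊨_X ∀x(φ ∨ ψ) but M ⊭_X (∀x φ) ∨ ψ. -/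
def SatPhi (X : Set (Bool → Fin 2)) : Prop :=
  (∀ s ∈ X, ∃ s' ∈ X, s false = s' true) ∧
  (∃ Y Z : Set (Bool → Fin 2), Y ∪ Z = X ∧ (∀ s ∈ Y, s false = 1) ∧ (∀ s ∈ Z, s true = 1))

def SatPsi (X : Set (Bool → Fin 2)) : Prop := ∀ s ∈ X, s true = 0

def f00 : Bool → Fin 2 := fun _ => 0
def f01 : Bool → Fin 2 := Function.update f00 true 1
def f10 : Bool → Fin 2 := Function.update f00 false 1
def f11 : Bool → Fin 2 := Function.update f01 false 1

lemma dup_pair : dupTeam ({f00, f01} : Set (Bool → Fin 2)) false = {f00, f10, f01, f11} := by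
  ext s
  constructor
  · rintro ⟨t, ht, a, rfl⟩
    rcases ht with rfl | rfl <;> fin_cases a <;> simp [f00, f01, f10, f11]
  · rintro (rfl | rfl | rfl | rfl)
    · exact ⟨f00, Or.inl rfl, 0, by decide⟩
    · exact ⟨f00, Or.inl rfl, 1, by decide⟩
    · exact ⟨f01, Or.inr rfl, 0, by decide⟩
    · exact ⟨f01, Or.inr rfl, 1, by decide⟩

/-- `∀x(φ ∨ ψ)` is not in general equivalent to `(∀x φ) ∨ ψ` even when `x`
is not free in `ψ`.  With `φ := (x ⊆ y ∧ (x=1 ∨ y=1))`, `ψ := (y=0)`, domain `{0,1}` and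
the team `X = {{(y,0)}, {(y,1)}}` (here realized with `x`-value `0`), we have
`M ⊨_X ∀x(φ ∨ ψ)` but `M ⊭_X (∀x φ) ∨ ψ`. -/
theorem forall_does_not_distribute_over_or :
    ∃ X : Set (Bool → Fin 2),
      X = {fun _ => 0, Function.update (fun _ => 0) true 1} ∧
      (∃ Y Z : Set (Bool → Fin 2), Y ∪ Z = dupTeam X false ∧ SatPhi Y ∧ SatPsi Z) ∧
      ¬ (∃ Y Z : Set (Bool → Fin 2), Y ∪ Z = X ∧ SatPhi (dupTeam Y false) ∧ SatPsi Z) := by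
  refine ⟨{f00, f01}, rfl, ⟨{f01, f11, f10}, {f00, f10}, ?_, ?_, ?_⟩, ?_⟩
  · rw [dup_pair]
    ext s
    simp only [Set.mem_union, Set.mem_insert_iff, Set.mem_singleton_iff]
    tauto
  · constructor
    · rintro s (rfl | rfl | rfl)
      · exact ⟨f10, by right; right; rfl, by decide⟩
      · exact ⟨f11, by right; left; rfl, by decide⟩
      · exact ⟨f11, by right; left; rfl, by decide⟩
    · refine ⟨{f11, f10}, {f01, f11}, ?_, ?_, ?_⟩
      · ext s
        simp only [Set.mem_union, Set.mem_insert_iff, Set.mem_singleton_iff]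
        tauto
      · rintro s (rfl | rfl) <;> decide
      · rintro s (rfl | rfl) <;> decide
  · rintro s (rfl | rfl) <;> decide
  · rintro ⟨Y, Z, hYZ, hPhi, hPsi⟩
    have hY01 : f01 ∈ Y := by
      have : f01 ∈ Y ∪ Z := hYZ ▸ (by right; rfl)
      rcases this with h | h
      · exact h
      · exact absurd (hPsi f01 h) (by decide)
    have hYsub : Y ⊆ ({f00, f01} : Set (Bool → Fin 2)) := hYZ ▸ Set.subset_union_left
    by_cases h00 : f00 ∈ Y
    · -- f00 ∈ dupTeam Y false, violates the split
      have hmem : f00 ∈ dupTeam Y false := ⟨f00, h00, 0, by decide⟩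
      obtain ⟨Y', Z', hU, hY', hZ'⟩ := hPhi.2
      have : f00 ∈ Y' ∪ Z' := hU ▸ hmem
      rcases this with h | h
      · exact absurd (hY' f00 h) (by decide)
      · exact absurd (hZ' f00 h) (by decide)
    · -- inclusion fails at f01
      have hmem : f01 ∈ dupTeam Y false := ⟨f01, hY01, 0, by decide⟩
      obtain ⟨s', ⟨t, ht, a, rfl⟩, heq⟩ := hPhi.1 f01 hmem
      have ht' := hYsub ht
      rcases ht' with rfl | rfl
      · exact h00 ht
      · fin_cases a <;> revert heq <;> decide
end

section
/- The inclusion atom t1 ⊆ t2 is expressible in independence logic: for every M and team X, M ⊨_X t1 ⊆ t2 iff M ⊨_X ∀v1 ∀v2 ∀z((¬z=t1 ∧ ¬z=t2) ∨ (¬v1=v2 ∧ ¬z=t2) ∨ ((v1=v2 ∨ z=t2) ∧ z ⊥ v1v2)), where v1, v2 are fresh variables and z is a fresh variable tuple of the same length as t1. -/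
open FirstOrder Language

open FirstOrder Language

/-- The first-order formula expressing componentwise equality of two tuples of terms. -/
def eqTuple {L : Language} (us vs : List (L.Term ℕ)) : L.Formula ℕ :=
  ((us.zip vs).map fun p => Term.equal p.1 p.2).foldr (· ⊓ ·) ⊤

/-- Iterated universal quantification in team semantics. -/
def allList {L : Language} (xs : List ℕ) (φ : TeamFormula L) : TeamFormula L :=
  xs.foldr TeamFormula.all φ

namespace IncAux

variable {L : Language} {M : Type*} [L.Structure M]

open TeamFormula

lemma realize_congr_vars (t : L.Term ℕ) {s s' : ℕ → M}
    (h : ∀ v ∈ t.varFinset, s v = s' v) : t.realize s = t.realize s' := by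
  induction t with
  | var v => exact h v (by simp)
  | func f ts ih =>
    simp only [Term.realize]
    congr 1
    funext i
    refine ih i fun v hv => h v ?_
    simp only [Term.varFinset, Finset.mem_biUnion]
    exact ⟨i, Finset.mem_univ i, hv⟩

lemma listVal_congr (ts : List (L.Term ℕ)) {s s' : ℕ → M}
    (h : ∀ t ∈ ts, t.realize s = t.realize s') : listVal ts s = listVal ts s' :=
  List.map_congr_left h

lemma listVal_var (z : List ℕ) (s : ℕ → M) :
    listVal (L := L) (z.map Term.var) s = z.map s := by
  simp [listVal, List.map_map, Function.comp, Term.realize]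

lemma realize_eqTuple {us vs : List (L.Term ℕ)} (h : us.length = vs.length) (s : ℕ → M) :
    (eqTuple us vs).Realize s ↔ listVal us s = listVal vs s := by
  induction us generalizing vs with
  | nil =>
    rcases vs with _ | ⟨v, vs⟩
    · simp [eqTuple, listVal]
    · simp at h
  | cons u us ih =>
    rcases vs with _ | ⟨v, vs⟩
    · simp at h
    · simp only [List.length_cons, Nat.succ_inj] at h
      have : eqTuple (u :: us) (v :: vs) = Term.equal u v ⊓ eqTuple us vs := rfl
      rw [this]
      simp only [Formula.realize_inf, Formula.realize_equal, ih h, listVal,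
        List.map_cons, List.cons.injEq]

/-- The team obtained by universally extending with variable `x`. -/
def teamAll (x : ℕ) (X : Team M) : Team M :=
  {s' | ∃ s ∈ X, ∃ a : M, s' = Function.update s x a}

lemma sat_allList (xs : List ℕ) (φ : TeamFormula L) (X : Team M) :
    (allList xs φ).Sat M X ↔ φ.Sat M (xs.foldl (fun Y x => teamAll x Y) X) := by
  induction xs generalizing X with
  | nil => rfl
  | cons x xs ih => exact ih (teamAll x X)

lemma mem_foldl_teamAll (xs : List ℕ) (X : Team M) (s' : ℕ → M) :
    s' ∈ xs.foldl (fun Y x => teamAll x Y) X ↔ ∃ s ∈ X, ∀ n, n ∉ xs → s' n = s n := by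
  induction xs generalizing X with
  | nil =>
    simp only [List.foldl_nil]
    constructor
    · intro h; exact ⟨s', h, fun n _ => rfl⟩
    · rintro ⟨s, hs, h⟩
      have : s' = s := funext fun n => h n (by simp)
      rw [this]; exact hs
  | cons x xs ih =>
    rw [List.foldl_cons, ih]
    constructor
    · rintro ⟨s'', ⟨s, hs, a, rfl⟩, h⟩
      refine ⟨s, hs, fun n hn => ?_⟩
      have hnx : n ≠ x := fun hnx => hn (by simp [hnx])
      have hnxs : n ∉ xs := fun hnxs => hn (by simp [hnxs])
      rw [h n hnxs, Function.update_of_ne hnx]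
    · rintro ⟨s, hs, h⟩
      refine ⟨Function.update s x (s' x), ⟨s, hs, s' x, rfl⟩, fun n hn => ?_⟩
      by_cases hnx : n = x
      · subst hnx; simp
      · rw [Function.update_of_ne hnx]
        exact h n (by simp [hnx, hn])

/-- Multiple update of an assignment. -/
def updList (s : ℕ → M) (xs : List ℕ) (ws : List M) : ℕ → M :=
  (xs.zip ws).foldr (fun p f => Function.update f p.1 p.2) s

lemma updList_notMem {xs : List ℕ} {n : ℕ} (hn : n ∉ xs) (s : ℕ → M) (ws : List M) :
    updList s xs ws n = s n := by
  induction xs generalizing ws with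
  | nil => rfl
  | cons x xs ih =>
    rcases ws with _ | ⟨w, ws⟩
    · rfl
    · have hnx : n ≠ x := fun h => hn (by simp [h])
      have hnxs : n ∉ xs := fun h => hn (by simp [h])
      show Function.update (updList s xs ws) x w n = s n
      rw [Function.update_of_ne hnx]
      exact ih hnxs ws

lemma map_updList {xs : List ℕ} (hnd : xs.Nodup) {ws : List M} (hlen : ws.length = xs.length)
    (s : ℕ → M) : xs.map (updList s xs ws) = ws := by
  induction xs generalizing ws with
  | nil =>
    rcases ws with _ | ⟨w, ws⟩
    · rfl
    · simp at hlen
  | cons x xs ih =>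
    rcases ws with _ | ⟨w, ws⟩
    · simp at hlen
    · simp only [List.length_cons, Nat.succ_inj] at hlen
      simp only [List.nodup_cons] at hnd
      show (x :: xs).map (Function.update (updList s xs ws) x w) = w :: ws
      simp only [List.map_cons, Function.update_self, List.cons.injEq, true_and]
      have heq : List.map (Function.update (updList s xs ws) x w) xs
          = List.map (updList s xs ws) xs :=
        List.map_congr_left fun n hn => by
          rw [Function.update_of_ne (fun h : n = x => hnd.1 (h ▸ hn))]
      rw [heq]
      exact ih hnd.2 hlen

end IncAux

/-- the inclusion atom `t1 ⊆ t2` is expressible in independence logic: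
for every `M` and team `X`, `M ⊨_X t1 ⊆ t2` iff
`M ⊨_X ∀v1 ∀v2 ∀z ((¬z=t1 ∧ ¬z=t2) ∨ (¬v1=v2 ∧ ¬z=t2) ∨ ((v1=v2 ∨ z=t2) ∧ z ⊥ v1v2))`,
where `v1, v2` are fresh variables and `z` is a fresh tuple of variables of the same
length as `t1`, none of them occurring in `t1, t2`. -/



theorem inclusion_atom_expressible {L : Language} {M : Type*} [L.Structure M]
    (t1 t2 : List (L.Term ℕ)) (hlen : t1.length = t2.length)
    (v1 v2 : ℕ) (z : List ℕ) (hzlen : z.length = t1.length)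
    (hdistinct : z.Nodup) (hv : v1 ≠ v2) (hv1z : v1 ∉ z) (hv2z : v2 ∉ z)
    (hfresh : ∀ t ∈ t1 ++ t2, ∀ v ∈ v1 :: v2 :: z, v ∉ t.varFinset)
    (X : TeamFormula.Team M) :
    (∀ s ∈ X, ∃ s' ∈ X, TeamFormula.listVal t1 s = TeamFormula.listVal t2 s') ↔
      (allList (v1 :: v2 :: z)
        (TeamFormula.or
          (.fo (((eqTuple (z.map Term.var) t1).not) ⊓ ((eqTuple (z.map Term.var) t2).not)))
          (TeamFormula.or
            (.fo (((Term.equal (Term.var v1) (Term.var v2)).not) ⊓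
              ((eqTuple (z.map Term.var) t2).not)))
            (TeamFormula.and
              (TeamFormula.or
                (.fo (Term.equal (Term.var v1) (Term.var v2)))
                (.fo (eqTuple (z.map Term.var) t2)))
              (TeamFormula.indep (z.map Term.var) [Term.var v1, Term.var v2] []))))).Sat M X := by
  classical
  have hndvars : (v1 :: v2 :: z).Nodup := by
    simp only [List.nodup_cons]
    exact ⟨by simp [hv, hv1z], hv2z, hdistinct⟩
  have hlen2 : z.length = t2.length := hzlen.trans hlen
  have hztlen1 : (z.map (Term.var : ℕ → L.Term ℕ)).length = t1.length := by simp [hzlen]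
  have hztlen2 : (z.map (Term.var : ℕ → L.Term ℕ)).length = t2.length := by simp [hlen2]
  -- realize lemmas for eqTuple against variables
  have hEq1 : ∀ u : ℕ → M, (eqTuple (z.map Term.var) t1).Realize u ↔
      z.map u = TeamFormula.listVal t1 u := fun u => by
    rw [IncAux.realize_eqTuple hztlen1, IncAux.listVal_var]
  have hEq2 : ∀ u : ℕ → M, (eqTuple (z.map Term.var) t2).Realize u ↔
      z.map u = TeamFormula.listVal t2 u := fun u => by
    rw [IncAux.realize_eqTuple hztlen2, IncAux.listVal_var]
  -- freshness
  have hvalt : ∀ {s' s0 : ℕ → M}, (∀ n, n ∉ v1 :: v2 :: z → s' n = s0 n) →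
      ∀ t ∈ t1 ++ t2, Term.realize s' t = Term.realize s0 t := by
    intro s' s0 h t ht
    exact IncAux.realize_congr_vars t fun v hv => h v fun hmem => hfresh t ht v hmem hv
  have hval1 : ∀ {s' s0 : ℕ → M}, (∀ n, n ∉ v1 :: v2 :: z → s' n = s0 n) →
      TeamFormula.listVal t1 s' = TeamFormula.listVal t1 s0 := fun h =>
    IncAux.listVal_congr t1 fun t ht => hvalt h t (List.mem_append_left _ ht)
  have hval2 : ∀ {s' s0 : ℕ → M}, (∀ n, n ∉ v1 :: v2 :: z → s' n = s0 n) →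
      TeamFormula.listVal t2 s' = TeamFormula.listVal t2 s0 := fun h =>
    IncAux.listVal_congr t2 fun t ht => hvalt h t (List.mem_append_right _ ht)
  rw [IncAux.sat_allList]
  set E : TeamFormula.Team M :=
    (v1 :: v2 :: z).foldl (fun Y x => IncAux.teamAll x Y) X with hE
  have hmemE : ∀ s' : ℕ → M, s' ∈ E ↔ ∃ s ∈ X, ∀ n, n ∉ v1 :: v2 :: z → s' n = s n :=
    fun s' => IncAux.mem_foldl_teamAll _ X s'
  constructor
  · -- forward direction
    intro hinc
    set Y1 : TeamFormula.Team M := {u | u ∈ E ∧ ¬ z.map u = TeamFormula.listVal t1 u ∧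
        ¬ z.map u = TeamFormula.listVal t2 u} with hY1def
    set Y2 : TeamFormula.Team M := {u | u ∈ E ∧ ¬ u v1 = u v2 ∧
        z.map u = TeamFormula.listVal t1 u ∧ ¬ z.map u = TeamFormula.listVal t2 u} with hY2def
    set Y3 : TeamFormula.Team M := {u | u ∈ E ∧ (z.map u = TeamFormula.listVal t2 u ∨
        (z.map u = TeamFormula.listVal t1 u ∧ u v1 = u v2))} with hY3def
    have hY3E : ∀ u ∈ Y3, u ∈ E := fun u hu => hu.1
    -- membership of the modified assignment in Y3 (the key construction)
    have hkey : ∀ s ∈ Y3, ∀ s' ∈ Y3, ∃ s'' ∈ Y3,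
        z.map s'' = z.map s ∧ s'' v1 = s' v1 ∧ s'' v2 = s' v2 := by
      intro sa hsa sb hsb
      obtain ⟨haE, hcase⟩ := hsa
      rcases hcase with h2 | ⟨h1, _⟩
      · -- case z = t2 at sa : just change v1, v2
        refine ⟨Function.update (Function.update sa v1 (sb v1)) v2 (sb v2), ?_, ?_, ?_, ?_⟩
        rotate_left
        · exact List.map_congr_left fun n hn => by
            rw [Function.update_of_ne (fun h : n = v2 => hv2z (h ▸ hn)),
              Function.update_of_ne (fun h : n = v1 => hv1z (h ▸ hn))]
        · rw [Function.update_of_ne hv, Function.update_self]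
        · rw [Function.update_self]
        · have hag : ∀ n, n ∉ v1 :: v2 :: z →
              Function.update (Function.update sa v1 (sb v1)) v2 (sb v2) n = sa n := by
            intro n hn
            simp only [List.mem_cons, not_or] at hn
            rw [Function.update_of_ne hn.2.1, Function.update_of_ne hn.1]
          have hmapz : z.map (Function.update (Function.update sa v1 (sb v1)) v2 (sb v2))
              = z.map sa := List.map_congr_left fun n hn => by
            rw [Function.update_of_ne (fun h : n = v2 => hv2z (h ▸ hn)),
              Function.update_of_ne (fun h : n = v1 => hv1z (h ▸ hn))]
          obtain ⟨s0, hs0, hag0⟩ := (hmemE sa).1 haE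
          refine ⟨(hmemE _).2 ⟨s0, hs0, fun n hn => (hag n hn).trans (hag0 n hn)⟩, ?_⟩
          left
          rw [hmapz, h2]
          exact (hval2 hag).symm
      · -- case z = t1 at sa and sa v1 = sa v2 : use the inclusion hypothesis
        obtain ⟨s0, hs0, hag0⟩ := (hmemE sa).1 haE
        obtain ⟨s0', hs0', ht12⟩ := hinc s0 hs0
        have hwlen : (sb v1 :: sb v2 :: z.map sa).length = (v1 :: v2 :: z).length := by simp
        set s'' : ℕ → M := IncAux.updList s0' (v1 :: v2 :: z) (sb v1 :: sb v2 :: z.map sa)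
          with hs''def
        have hmap := IncAux.map_updList hndvars hwlen s0'
        rw [← hs''def] at hmap
        simp only [List.map_cons, List.cons.injEq] at hmap
        obtain ⟨hm1, hm2, hmz⟩ := hmap
        have hagE : ∀ n, n ∉ v1 :: v2 :: z → s'' n = s0' n := fun n hn =>
          IncAux.updList_notMem hn s0' _
        refine ⟨s'', ⟨(hmemE s'').2 ⟨s0', hs0', hagE⟩, ?_⟩, hmz, hm1, hm2⟩
        left
        rw [hmz, h1, hval1 hag0, ht12]
        exact (hval2 hagE).symm
    refine ⟨Y1, Y2 ∪ Y3, ?_, ?_, Y2, Y3, rfl, ?_, ?_, ?_⟩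
    · -- union is E
      ext u
      simp only [Set.mem_union, hY1def, hY2def, hY3def, Set.mem_setOf_eq]
      constructor
      · rintro (h | h | h) <;> exact h.1
      · intro hu
        by_cases h1 : z.map u = TeamFormula.listVal t1 u <;>
          by_cases h2 : z.map u = TeamFormula.listVal t2 u <;>
          by_cases h12 : u v1 = u v2 <;> tauto
    · -- Y1 satisfies the first disjunct
      rintro u ⟨-, h1, h2⟩
      rw [Formula.realize_inf, Formula.realize_not, Formula.realize_not, hEq1, hEq2]
      exact ⟨h1, h2⟩
    · -- Y2 satisfies the second disjunct
      rintro u ⟨-, h12, -, h2⟩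
      rw [Formula.realize_inf, Formula.realize_not, Formula.realize_not,
        Formula.realize_equal, hEq2]
      exact ⟨by simpa using h12, h2⟩
    · -- Y3 satisfies the first-order part of the third disjunct
      refine ⟨{u | u ∈ Y3 ∧ u v1 = u v2}, {u | u ∈ Y3 ∧ z.map u = TeamFormula.listVal t2 u},
        ?_, ?_, ?_⟩
      · ext u
        simp only [Set.mem_union, Set.mem_setOf_eq, hY3def]
        constructor
        · rintro (h | h) <;> exact h.1
        · rintro ⟨hE', h | h⟩
          · exact Or.inr ⟨⟨hE', Or.inl h⟩, h⟩
          · exact Or.inl ⟨⟨hE', Or.inr h⟩, h.2⟩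
      · rintro u ⟨-, h⟩
        rw [Formula.realize_equal]
        simpa using h
      · rintro u ⟨-, h⟩
        rw [hEq2]
        exact h
    · -- Y3 satisfies the independence atom
      intro sa hsa sb hsb _
      obtain ⟨s'', hs'', hmz, hm1, hm2⟩ := hkey sa hsa sb hsb
      refine ⟨s'', hs'', ?_, rfl, ?_⟩
      · rw [IncAux.listVal_var, IncAux.listVal_var, hmz]
      · simp only [TeamFormula.listVal, List.map_cons, List.map_nil, Term.realize_var]
        rw [hm1, hm2]
  · -- backward direction
    intro hsat s hs
    obtain ⟨Y, Z, hYZ, hY1, hrest⟩ := hsat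
    obtain ⟨Y2, Y3, hY23, hY2, hY3and⟩ := hrest
    obtain ⟨hor, hindep⟩ := hY3and
    obtain ⟨Y3a, Y3b, hY3ab, hY3a, hY3b⟩ := hor
    by_cases htriv : ∀ a b : M, a = b
    · refine ⟨s, hs, ?_⟩
      refine List.ext_get (by simp [TeamFormula.listVal, hlen]) fun i h1 h2 => ?_
      exact htriv _ _
    · push_neg at htriv
      obtain ⟨a, b, hab⟩ := htriv
      -- the two key extended assignments
      have hwlen1 : (a :: a :: TeamFormula.listVal t1 s).length = (v1 :: v2 :: z).length := by
        simp [TeamFormula.listVal, hzlen]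
      have hwlen2 : (a :: b :: TeamFormula.listVal t2 s).length = (v1 :: v2 :: z).length := by
        simp [TeamFormula.listVal, hlen2]
      set s1 : ℕ → M := IncAux.updList s (v1 :: v2 :: z) (a :: a :: TeamFormula.listVal t1 s)
        with hs1def
      set u : ℕ → M := IncAux.updList s (v1 :: v2 :: z) (a :: b :: TeamFormula.listVal t2 s)
        with hudef
      have hmap1 := IncAux.map_updList hndvars hwlen1 s
      have hmap2 := IncAux.map_updList hndvars hwlen2 s
      rw [← hs1def] at hmap1
      rw [← hudef] at hmap2
      simp only [List.map_cons, List.cons.injEq] at hmap1 hmap2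
      obtain ⟨hs1v1, hs1v2, hs1z⟩ := hmap1
      obtain ⟨huv1, huv2, huz⟩ := hmap2
      have hag1 : ∀ n, n ∉ v1 :: v2 :: z → s1 n = s n := fun n hn =>
        IncAux.updList_notMem hn s _
      have hag2 : ∀ n, n ∉ v1 :: v2 :: z → u n = s n := fun n hn =>
        IncAux.updList_notMem hn s _
      have hs1E : s1 ∈ E := (hmemE s1).2 ⟨s, hs, hag1⟩
      have huE : u ∈ E := (hmemE u).2 ⟨s, hs, hag2⟩
      have hP1s1 : z.map s1 = TeamFormula.listVal t1 s1 := by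
        rw [hs1z, hval1 hag1]
      have hP2u : z.map u = TeamFormula.listVal t2 u := by
        rw [huz, hval2 hag2]
      -- s1 ∈ Y3
      have hs1Y3 : s1 ∈ Y3 := by
        rw [← hYZ] at hs1E
        rcases hs1E with h | h
        · exfalso
          have := hY1 s1 h
          rw [Formula.realize_inf, Formula.realize_not, hEq1] at this
          exact this.1 hP1s1
        · rw [← hY23] at h
          rcases h with h | h
          · exfalso
            have := hY2 s1 h
            rw [Formula.realize_inf, Formula.realize_not, Formula.realize_equal] at this
            exact this.1 (by simp [hs1v1, hs1v2])
          · exact h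
      -- u ∈ Y3
      have huY3 : u ∈ Y3 := by
        rw [← hYZ] at huE
        rcases huE with h | h
        · exfalso
          have := hY1 u h
          rw [Formula.realize_inf, Formula.realize_not, Formula.realize_not, hEq2] at this
          exact this.2 hP2u
        · rw [← hY23] at h
          rcases h with h | h
          · exfalso
            have := hY2 u h
            rw [Formula.realize_inf, Formula.realize_not, Formula.realize_not, hEq2] at this
            exact this.2 hP2u
          · exact h
      -- apply the independence atom
      obtain ⟨s'', hs''Y3, hzval, -, hvval⟩ := hindep s1 hs1Y3 u huY3 rfl
      rw [IncAux.listVal_var, IncAux.listVal_var] at hzval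
      simp only [TeamFormula.listVal, List.map_cons, List.map_nil, Term.realize_var,
        List.cons.injEq, and_true] at hvval
      obtain ⟨hsv1, hsv2⟩ := hvval
      rw [huv1] at hsv1
      rw [huv2] at hsv2
      -- s'' is in Y3b, hence z = t2 at s''
      have hs''P2 : z.map s'' = TeamFormula.listVal t2 s'' := by
        rw [← hY3ab] at hs''Y3
        rcases hs''Y3 with h | h
        · exfalso
          have := hY3a s'' h
          rw [Formula.realize_equal] at this
          simp only [Term.realize_var] at this
          rw [hsv1, hsv2] at this
          exact hab this
        · have := hY3b s'' h
          rw [hEq2] at this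
          exact this
      -- s'' is in E, so it extends some element of X
      have hs''E : s'' ∈ E := by
        rw [← hYZ]
        right
        rw [← hY23]
        right
        exact hs''Y3
      obtain ⟨s0, hs0, hag⟩ := (hmemE s'').1 hs''E
      refine ⟨s0, hs0, ?_⟩
      rw [← hval2 hag, ← hs''P2, hzval, hs1z]
end

section
/- A sentence φ of the normal form ∀x ∃y (⋀_{1≤i≤m} u_i ⊥_{w_i} v_i ∧ θ), with θ quantifier-free first-order and u_i, v_i, w_i tuples of existentially quantified variables, logically implies its associated game expression Φ: if M ⊨ φ then player II has a winning strategy in the semantic game for Φ; conversely, in countable models, if M ⊨ Φ then M ⊨ φ. -/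
namespace GameExpression

variable {M : Type*}

/-- The value of a subtuple of `y` (given by a list of coordinates) under a tuple `b`. -/
def val {r' : ℕ} (c : List (Fin r')) (b : Fin r' → M) : List M := c.map b

/-- The thresholds `p 0 = 0`, `p n = p (n-1) + m * (p (n-1) + n + 1)^2`. -/
def pFun (m : ℕ) : ℕ → ℤ
  | 0 => 0
  | n + 1 => pFun m n + (m : ℤ) * (pFun m n + (n : ℤ) + 2) ^ 2

/-- `M ⊨ φ` for the normal-form sentence `φ = ∀x ∃y (⋀_{1≤i≤m} u_i ⊥_{w_i} v_i ∧ θ)`,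
with `x` of length `r`, `y` of length `r'`, `θ` quantifier-free first-order (abstracted
as a predicate on the values of `x` and `y`), and `u_i, v_i, w_i` subtuples of the
existentially quantified tuple `y`: there is a function `F` assigning to each value of
`x` a nonempty set of values of `y` such that the resulting team satisfies `θ`
pointwise and all the independence atoms `u_i ⊥_{w_i} v_i`. -/
def SatNormalForm {r r' m : ℕ} (θ : (Fin r → M) → (Fin r' → M) → Prop)
    (u v w : Fin m → List (Fin r')) : Prop :=
  ∃ F : (Fin r → M) → Set (Fin r' → M),
    (∀ a, (F a).Nonempty) ∧
    (∀ a, ∀ b ∈ F a, θ a b) ∧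
    (∀ i : Fin m, ∀ a, ∀ b ∈ F a, ∀ a', ∀ b' ∈ F a',
      val (w i) b = val (w i) b' →
      ∃ a'', ∃ b'' ∈ F a'', val (u i) b'' = val (u i) b ∧
        val (w i) b'' = val (w i) b ∧ val (v i) b'' = val (v i) b')

/-- A strategy for player II in the semantic game for the game expression `Φ`: at round
`n`, given player I's moves so far (values for `x_{0,0}, x_{1,-1}, ..., x_{n,-n}`), it
produces values for all the pairs `x_{n,i} y_{n,i}` (indexed by `i : ℤ`; only
`-n ≤ i ≤ p n` matter). -/
def Strategy (M : Type*) (r r' : ℕ) : Type _ :=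
  (n : ℕ) → (Fin (n + 1) → (Fin r → M)) → ℤ → ((Fin r → M) × (Fin r' → M))

/-- A strategy `σ` for II is winning in the semantic game for `Φ` if against every
sequence of moves `a` of player I the resulting assignment `s` is legal
(`s n (-n)` carries I's move `a n` in its `x`-part) and satisfies every `Ψ^n`:
(i) `θ` holds at every pair `(x_{n,i}, y_{n,i})` for `-n ≤ i ≤ p n`;
(ii) the pairs with `-n ≤ i ≤ p n` are copied at the next level; and
(iii) for all `1 ≤ i ≤ m` and `-(n+1) ≤ j, k ≤ p n`, either `w_i` is nonempty and takes
different values at indices `j` and `k`, or some witness index `p n < l ≤ p (n+1)`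
carries the `u_i`-and-`w_i`-values of `j` and the `v_i`-value of `k`. -/
def Winning {r r' m : ℕ} (θ : (Fin r → M) → (Fin r' → M) → Prop)
    (u v w : Fin m → List (Fin r')) (σ : Strategy M r r') : Prop :=
  ∀ a : ℕ → (Fin r → M),
    let s : ℕ → ℤ → ((Fin r → M) × (Fin r' → M)) :=
      fun n => σ n (fun k : Fin (n + 1) => a k)
    (∀ n : ℕ, (s n (-(n : ℤ))).1 = a n) ∧
    (∀ n : ℕ, ∀ i : ℤ, -(n : ℤ) ≤ i → i ≤ pFun m n → θ (s n i).1 (s n i).2) ∧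
    (∀ n : ℕ, ∀ i : ℤ, -(n : ℤ) ≤ i → i ≤ pFun m n → s (n + 1) i = s n i) ∧
    (∀ n : ℕ, ∀ i : Fin m, ∀ j k : ℤ,
      -((n : ℤ) + 1) ≤ j → j ≤ pFun m n → -((n : ℤ) + 1) ≤ k → k ≤ pFun m n →
      ((w i ≠ [] ∧ val (w i) (s (n + 1) j).2 ≠ val (w i) (s (n + 1) k).2) ∨
        ∃ l : ℤ, pFun m n < l ∧ l ≤ pFun m (n + 1) ∧
          val (u i) (s (n + 1) l).2 = val (u i) (s (n + 1) j).2 ∧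
          val (v i) (s (n + 1) l).2 = val (v i) (s (n + 1) k).2 ∧
          val (w i) (s (n + 1) l).2 = val (w i) (s (n + 1) j).2))


lemma pFun_nonneg (m : ℕ) : ∀ n, 0 ≤ pFun m n
  | 0 => le_refl 0
  | n + 1 => by
      have h1 := pFun_nonneg m n
      have h2 : (0:ℤ) ≤ (m:ℤ) * (pFun m n + (n:ℤ) + 2) ^ 2 := by positivity
      simp only [pFun]; linarith

lemma pFun_mono (m : ℕ) : Monotone (pFun m) := by
  apply monotone_nat_of_le_succ
  intro n
  have h2 : (0:ℤ) ≤ (m:ℤ) * (pFun m n + (n:ℤ) + 2) ^ 2 := by positivity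
  simp only [pFun]; linarith

/-- The encoding of a triple (atom index, row `j`, row `k`) as a fresh witness slot
in `(pFun m n, pFun m (n+1)]`. -/
def enc (m n : ℕ) (t : Fin m × ℤ × ℤ) : ℤ :=
  pFun m n + 1 + (t.1 : ℤ) +
    (m : ℤ) * ((t.2.1 + n + 1) + (pFun m n + (n : ℤ) + 2) * (t.2.2 + n + 1))

/-- The triple `(i, j, k)` is in range at level `n`. -/
def InRange (m n : ℕ) (t : Fin m × ℤ × ℤ) : Prop :=
  -((n:ℤ)+1) ≤ t.2.1 ∧ t.2.1 ≤ pFun m n ∧ -((n:ℤ)+1) ≤ t.2.2 ∧ t.2.2 ≤ pFun m n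

lemma enc_mem (m n : ℕ) {t : Fin m × ℤ × ℤ} (ht : InRange m n t) :
    pFun m n < enc m n t ∧ enc m n t ≤ pFun m (n+1) := by
  obtain ⟨i, j, k⟩ := t
  obtain ⟨hj1, hj2, hk1, hk2⟩ := ht
  have hp0 := pFun_nonneg m n
  have hm : (0:ℤ) < m := by exact_mod_cast i.pos
  have hi0 : (0:ℤ) ≤ (i:ℤ) := by positivity
  have hi1 : (i:ℤ) < m := by exact_mod_cast i.isLt
  set P : ℤ := pFun m n + (n:ℤ) + 2 with hP
  have hPpos : 0 < P := by simp only [hP]; linarith [Int.natCast_nonneg n]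
  have hJ0 : 0 ≤ j + (n:ℤ) + 1 := by linarith
  have hJ1 : j + (n:ℤ) + 1 < P := by simp only [hP]; linarith
  have hK0 : 0 ≤ k + (n:ℤ) + 1 := by linarith
  have hK1 : k + (n:ℤ) + 1 < P := by simp only [hP]; linarith
  have hXY : (j + (n:ℤ) + 1) + P * (k + (n:ℤ) + 1) ≤ P^2 - 1 := by nlinarith
  have hXY0 : 0 ≤ (j + (n:ℤ) + 1) + P * (k + (n:ℤ) + 1) := by positivity
  constructor
  · simp only [enc, ← hP]
    have := mul_nonneg (le_of_lt hm) hXY0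
    linarith
  · have hmul : (m:ℤ) * ((j + (n:ℤ) + 1) + P * (k + (n:ℤ) + 1)) ≤ (m:ℤ) * (P^2 - 1) :=
      mul_le_mul_of_nonneg_left hXY (le_of_lt hm)
    simp only [enc, pFun, ← hP]
    linarith [hmul]

lemma enc_inj (m n : ℕ) {t t' : Fin m × ℤ × ℤ} (ht : InRange m n t) (ht' : InRange m n t')
    (h : enc m n t = enc m n t') : t = t' := by
  obtain ⟨i, j, k⟩ := t
  obtain ⟨i', j', k'⟩ := t'
  obtain ⟨hj1, hj2, hk1, hk2⟩ := ht
  obtain ⟨hj1', hj2', hk1', hk2'⟩ := ht'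
  have hp0 := pFun_nonneg m n
  have hm : (0:ℤ) < m := by exact_mod_cast i.pos
  set P : ℤ := pFun m n + (n:ℤ) + 2 with hP
  have hPpos : 0 < P := by simp only [hP]; linarith [Int.natCast_nonneg n]
  set J := j + (n:ℤ) + 1 with hJ
  set K := k + (n:ℤ) + 1 with hK
  set J' := j' + (n:ℤ) + 1 with hJ'
  set K' := k' + (n:ℤ) + 1 with hK'
  have hJ0 : 0 ≤ J := by simp only [hJ]; linarith
  have hJ1 : J < P := by simp only [hJ, hP]; linarith
  have hK0 : 0 ≤ K := by simp only [hK]; linarith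
  have hK1 : K < P := by simp only [hK, hP]; linarith
  have hJ0' : 0 ≤ J' := by simp only [hJ']; linarith
  have hJ1' : J' < P := by simp only [hJ', hP]; linarith
  have hK0' : 0 ≤ K' := by simp only [hK']; linarith
  have hK1' : K' < P := by simp only [hK', hP]; linarith
  simp only [enc, ← hP, ← hJ, ← hK, ← hJ', ← hK'] at h
  have h0 : (i:ℤ) + (m:ℤ) * (J + P * K) = (i':ℤ) + (m:ℤ) * (J' + P * K') := by linarith
  have hi : (i:ℤ) = (i':ℤ) := by
    have e1 : ((i:ℤ) + (m:ℤ) * (J + P * K)) % m = (i:ℤ) % m := Int.add_mul_emod_self_left ..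
    have e2 : ((i':ℤ) + (m:ℤ) * (J' + P * K')) % m = (i':ℤ) % m :=
      Int.add_mul_emod_self_left ..
    have e3 : (i:ℤ) % m = i := Int.emod_eq_of_lt (by positivity) (by exact_mod_cast i.isLt)
    have e4 : (i':ℤ) % m = i' := Int.emod_eq_of_lt (by positivity) (by exact_mod_cast i'.isLt)
    rw [h0] at e1
    rw [e2, e3] at e1
    omega
  have h1 : J + P * K = J' + P * K' := by
    have : (m:ℤ) * (J + P * K) = (m:ℤ) * (J' + P * K') := by linarith
    exact mul_left_cancel₀ (ne_of_gt hm) this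
  have hJJ : J = J' := by
    have e1 : (J + P * K) % P = J % P := Int.add_mul_emod_self_left ..
    have e2 : (J' + P * K') % P = J' % P := Int.add_mul_emod_self_left ..
    rw [h1] at e1
    rw [Int.emod_eq_of_lt hJ0 hJ1, Int.emod_eq_of_lt hJ0' hJ1'] at *
    omega
  have hKK : K = K' := by
    have : P * K = P * K' := by linarith
    exact mul_left_cancel₀ (ne_of_gt hPpos) this
  have hii : i = i' := by
    apply Fin.ext
    exact_mod_cast hi
  refine Prod.ext hii (Prod.ext ?_ ?_) <;> simp_all

section Construct

variable {r r' m : ℕ} (u v w : Fin m → List (Fin r'))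
  (F : (Fin r → M) → Set (Fin r' → M)) (b0 : (Fin r → M) → (Fin r' → M))

/-- One-step extension of the previous level's assignment by player I's new move
at position `-(n+1)`. -/
def Bf (n : ℕ) (a : Fin (n + 2) → (Fin r → M))
    (prev : ℤ → ((Fin r → M) × (Fin r' → M))) (x : ℤ) : (Fin r → M) × (Fin r' → M) :=
  if x = -((n:ℤ)+1) then (a (Fin.last (n+1)), b0 (a (Fin.last (n+1)))) else prev x

open Classical in
/-- The strategy for player II built from a team witnessing `SatNormalForm`. -/
noncomputable def T : (n : ℕ) → (Fin (n + 1) → (Fin r → M)) → ℤ → ((Fin r → M) × (Fin r' → M))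
  | 0, a, _ => (a 0, b0 (a 0))
  | n+1, a, x =>
      if -(n:ℤ) ≤ x ∧ x ≤ pFun m n then T n (fun k => a k.castSucc) x
      else if x = -((n:ℤ)+1) then (a (Fin.last (n+1)), b0 (a (Fin.last (n+1))))
      else if h : ∃ q : (Fin m × ℤ × ℤ) × ((Fin r → M) × (Fin r' → M)),
          InRange m n q.1 ∧ enc m n q.1 = x ∧ q.2.2 ∈ F q.2.1 ∧
          val (u q.1.1) q.2.2 =
            val (u q.1.1) (Bf b0 n a (T n fun k => a k.castSucc) q.1.2.1).2 ∧
          val (w q.1.1) q.2.2 =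
            val (w q.1.1) (Bf b0 n a (T n fun k => a k.castSucc) q.1.2.1).2 ∧
          val (v q.1.1) q.2.2 =
            val (v q.1.1) (Bf b0 n a (T n fun k => a k.castSucc) q.1.2.2).2
        then h.choose.2
      else (a 0, b0 (a 0))

lemma T_zero (a : Fin 1 → (Fin r → M)) (x : ℤ) : T u v w F b0 0 a x = (a 0, b0 (a 0)) := by
  rw [T]

lemma T_mem (hb0 : ∀ x, b0 x ∈ F x) :
    ∀ (n : ℕ) (a : Fin (n+1) → (Fin r → M)) (x : ℤ),
      (T u v w F b0 n a x).2 ∈ F (T u v w F b0 n a x).1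
  | 0, a, x => hb0 _
  | n+1, a, x => by
      rw [T]
      split_ifs with h1 h2 h3
      · exact T_mem hb0 n _ x
      · exact hb0 _
      · exact h3.choose_spec.2.2.1
      · exact hb0 _

lemma Bf_mem (hb0 : ∀ x, b0 x ∈ F x) (n : ℕ) (a : Fin (n+2) → (Fin r → M)) (x : ℤ) :
    (Bf b0 n a (T u v w F b0 n fun k => a k.castSucc) x).2 ∈
      F (Bf b0 n a (T u v w F b0 n fun k => a k.castSucc) x).1 := by
  rw [Bf]
  split_ifs
  · exact hb0 _
  · exact T_mem u v w F b0 hb0 n _ x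

lemma T_succ (n : ℕ) (a : Fin (n+2) → (Fin r → M)) (x : ℤ)
    (h1 : -((n:ℤ)+1) ≤ x) (h2 : x ≤ pFun m n) :
    T u v w F b0 (n+1) a x = Bf b0 n a (T u v w F b0 n fun k => a k.castSucc) x := by
  rw [T, Bf]
  by_cases hx : x = -((n:ℤ)+1)
  · have := pFun_nonneg m n
    rw [if_neg (by omega), if_pos hx, if_pos hx]
  · rw [if_pos ⟨by omega, h2⟩, if_neg hx]

lemma T_witness (hb0 : ∀ x, b0 x ∈ F x)
    (hind : ∀ i : Fin m, ∀ a, ∀ b ∈ F a, ∀ a', ∀ b' ∈ F a',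
      val (w i) b = val (w i) b' →
      ∃ a'', ∃ b'' ∈ F a'', val (u i) b'' = val (u i) b ∧
        val (w i) b'' = val (w i) b ∧ val (v i) b'' = val (v i) b')
    (n : ℕ) (a : Fin (n+2) → (Fin r → M)) (i : Fin m) (j k : ℤ)
    (hj1 : -((n:ℤ)+1) ≤ j) (hj2 : j ≤ pFun m n)
    (hk1 : -((n:ℤ)+1) ≤ k) (hk2 : k ≤ pFun m n)
    (hw : val (w i) (T u v w F b0 (n+1) a j).2 = val (w i) (T u v w F b0 (n+1) a k).2) :
    ∃ l : ℤ, pFun m n < l ∧ l ≤ pFun m (n + 1) ∧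
      val (u i) (T u v w F b0 (n+1) a l).2 = val (u i) (T u v w F b0 (n+1) a j).2 ∧
      val (v i) (T u v w F b0 (n+1) a l).2 = val (v i) (T u v w F b0 (n+1) a k).2 ∧
      val (w i) (T u v w F b0 (n+1) a l).2 = val (w i) (T u v w F b0 (n+1) a j).2 := by
  have hTj := T_succ u v w F b0 n a j hj1 hj2
  have hTk := T_succ u v w F b0 n a k hk1 hk2
  rw [hTj, hTk] at hw
  obtain ⟨a'', b'', hb'', hu', hw', hv'⟩ :=
    hind i _ _ (Bf_mem u v w F b0 hb0 n a j) _ _ (Bf_mem u v w F b0 hb0 n a k) hw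
  have hC : ∃ q : (Fin m × ℤ × ℤ) × ((Fin r → M) × (Fin r' → M)),
      InRange m n q.1 ∧ enc m n q.1 = enc m n (i, j, k) ∧ q.2.2 ∈ F q.2.1 ∧
      val (u q.1.1) q.2.2 =
        val (u q.1.1) (Bf b0 n a (T u v w F b0 n fun k => a k.castSucc) q.1.2.1).2 ∧
      val (w q.1.1) q.2.2 =
        val (w q.1.1) (Bf b0 n a (T u v w F b0 n fun k => a k.castSucc) q.1.2.1).2 ∧
      val (v q.1.1) q.2.2 =
        val (v q.1.1) (Bf b0 n a (T u v w F b0 n fun k => a k.castSucc) q.1.2.2).2 :=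
    ⟨((i, j, k), (a'', b'')), ⟨hj1, hj2, hk1, hk2⟩, rfl, hb'', hu', hw', hv'⟩
  have hr : InRange m n (i, j, k) := ⟨hj1, hj2, hk1, hk2⟩
  have hlm := enc_mem m n hr
  have hp0 := pFun_nonneg m n
  have hTl : T u v w F b0 (n+1) a (enc m n (i, j, k)) = hC.choose.2 := by
    rw [T, if_neg (by omega), if_neg (by omega), dif_pos hC]
  obtain ⟨hq1, hq2, hq3, hq4, hq5, hq6⟩ := hC.choose_spec
  have hqeq : hC.choose.1 = (i, j, k) := enc_inj m n hq1 hr hq2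
  rw [hqeq] at hq4 hq5 hq6
  exact ⟨enc m n (i, j, k), hlm.1, hlm.2, by rw [hTl, hTj]; exact hq4,
    by rw [hTl, hTk]; exact hq6, by rw [hTl, hTj]; exact hq5⟩

end Construct

/-- a normal-form sentence `φ = ∀x ∃y (⋀_{1≤i≤m} u_i ⊥_{w_i} v_i ∧ θ)`
logically implies its associated game expression `Φ`: if `M ⊨ φ` then player II has a
winning strategy in the semantic game for `Φ`.  Conversely, in countable models, if
player II has a winning strategy for `Φ` then `M ⊨ φ`. -/
theorem normal_form_iff_game_expression {M : Type*} [Nonempty M] {r r' m : ℕ}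
    (θ : (Fin r → M) → (Fin r' → M) → Prop) (u v w : Fin m → List (Fin r')) :
    (SatNormalForm θ u v w → ∃ σ : Strategy M r r', Winning θ u v w σ) ∧
    (∀ (_ : Countable M),
      (∃ σ : Strategy M r r', Winning θ u v w σ) → SatNormalForm θ u v w) := by
  constructor
  · rintro ⟨F, hne, hθF, hind⟩
    choose b0 hb0 using hne
    refine ⟨T u v w F b0, ?_⟩
    intro a
    have hres : ∀ n : ℕ, (fun k : Fin (n+1) => (fun k : Fin (n+2) => a k) k.castSucc)
        = (fun k : Fin (n+1) => a k) := fun n => rfl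
    refine ⟨?_, ?_, ?_, ?_⟩ <;> dsimp only
    · intro n
      match n with
      | 0 => rw [show (-(0:ℕ) : ℤ) = 0 by norm_num, T_zero]; simp
      | n+1 =>
          have h1 : -(((n:ℕ)+1 : ℕ) : ℤ) = -((n:ℤ)+1) := by push_cast; ring
          rw [h1, T_succ u v w F b0 n _ _ (le_refl _) (by have := pFun_nonneg m n; omega),
            Bf, if_pos rfl]
          simp [Fin.last]
    · intro n i _ _
      exact hθF _ _ (T_mem u v w F b0 hb0 n _ i)
    · intro n i hi1 hi2
      rw [T_succ u v w F b0 n _ i (by omega) hi2, Bf, if_neg (by omega), hres]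
    · intro n i j k hj1 hj2 hk1 hk2
      by_cases hw : val (w i) (T u v w F b0 (n+1) (fun k : Fin (n+2) => a k) j).2
          = val (w i) (T u v w F b0 (n+1) (fun k : Fin (n+2) => a k) k).2
      · exact Or.inr (T_witness u v w F b0 hb0 hind n _ i j k hj1 hj2 hk1 hk2 hw)
      · refine Or.inl ⟨?_, hw⟩
        intro hnil
        exact hw (by rw [hnil]; rfl)
  · intro hcount ⟨σ, hσ⟩
    obtain ⟨e, he⟩ := exists_surjective_nat (Fin r → M)
    obtain ⟨h1, h2, h3, h4⟩ := hσ e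
    set s : ℕ → ℤ → ((Fin r → M) × (Fin r' → M)) :=
      fun n => σ n (fun k : Fin (n + 1) => e k) with hs
    have hpers : ∀ (n N : ℕ), n ≤ N → ∀ i : ℤ, -(n:ℤ) ≤ i → i ≤ pFun m n → s N i = s n i := by
      intro n N hnN
      induction N with
      | zero => intro i _ _; obtain rfl : n = 0 := Nat.le_zero.mp hnN; rfl
      | succ N ih =>
          intro i hi1 hi2
          rcases Nat.lt_or_ge n (N+1) with h | h
          · have hn : n ≤ N := Nat.lt_succ_iff.mp h
            rw [h3 N i (le_trans (by push_cast; omega) hi1)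
              (le_trans hi2 (pFun_mono m hn))]
            exact ih hn i hi1 hi2
          · obtain rfl : n = N + 1 := le_antisymm hnN h
            rfl
    refine ⟨fun a0 => {b | ∃ n : ℕ, ∃ i : ℤ, -(n:ℤ) ≤ i ∧ i ≤ pFun m n ∧ s n i = (a0, b)},
      ?_, ?_, ?_⟩
    · intro a0
      obtain ⟨n, rfl⟩ := he a0
      refine ⟨(s n (-(n:ℤ))).2, n, -(n:ℤ), le_refl _, ?_, ?_⟩
      · have := pFun_nonneg m n; omega
      · rw [← h1 n]
    · rintro a0 b ⟨n, i, hi1, hi2, hsi⟩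
      have := h2 n i hi1 hi2
      rw [hsi] at this
      exact this
    · rintro i a0 b ⟨n, j, hj1, hj2, hsj⟩ a0' b' ⟨n', k, hk1, hk2, hsk⟩ hww
      set N := max n n' with hN
      have hnN : n ≤ N := le_max_left _ _
      have hnN' : n' ≤ N := le_max_right _ _
      have hsj' : s (N+1) j = (a0, b) := by
        rw [h3 N j (le_trans (by push_cast; omega) hj1) (le_trans hj2 (pFun_mono m hnN)),
          hpers n N hnN j hj1 hj2, hsj]
      have hsk' : s (N+1) k = (a0', b') := by
        rw [h3 N k (le_trans (by push_cast; omega) hk1) (le_trans hk2 (pFun_mono m hnN')),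
          hpers n' N hnN' k hk1 hk2, hsk]
      have h4' := h4 N i j k (le_trans (by push_cast; omega) hj1)
        (le_trans hj2 (pFun_mono m hnN)) (le_trans (by push_cast; omega) hk1)
        (le_trans hk2 (pFun_mono m hnN'))
      rcases h4' with ⟨_, hne'⟩ | ⟨l, hl1, hl2, hu', hv', hw'⟩
      · rw [hsj', hsk'] at hne'
        exact absurd hww hne'
      · rw [hsj'] at hu' hw'
        rw [hsk'] at hv'
        refine ⟨(s (N+1) l).1, (s (N+1) l).2, ⟨N+1, l, ?_, hl2, rfl⟩, hu', hw', hv'⟩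
        have := pFun_nonneg m N
        push_cast
        omega


end GameExpression
end
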